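/- arXiv:2305.06887 — 2 statements merged into one kernel-verified Lean document; each statement's English description precedes it below -/
import Mathlib

section
/- Let 𝒵, 𝒳, 𝒰 be finite alphabets and, for each n, let (Z^n, X^n, U^n) be random sequences taking values in 𝒵^n × 𝒳^n × 𝒰^n satisfying the Markov condition U^n → X^n → Z^n. Let {Ψ_n}_{n=1}^∞ be a sequence of mappings Ψ_n : 𝒵^n × 𝒰^n → {0,1} such that lim_{n→∞} P(Ψ_n(Z^n, U^n) = 1) = 0. Then for every ε > 0 there exists a sequence {f_n}_{n=1}^∞ of deterministic mappings f_n : 𝒳^n → {u_1^n, …, u_M^n} ⊆ 𝒰^n with M = ⌈e^{n(Ī(U;X)+ε)}⌉ such that lim_{n→∞} P(Ψ_n(Z^n, f_n(X^n)) = 1) = 0. -/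
/-!
Random coding. Draw `M = ⌈e^{n(Ī+ε)}⌉` codewords i.i.d. from `P_{U^n}` and map `x` to a codeword
`u` that is typical with `x`, i.e. `W(u|x) ≤ e^{n(Ī+ε/2)} P_U(u)`, and whose conditional error
`P(Ψ(Z^n, u) = 1 | X^n = x)` is at most `γ`. Typicality gives `P_U ≥ e^{-n(Ī+ε/2)} W(·|x)` on the
qualifying set, so no codeword qualifies with probability at most
`exp(-e^{nε/2}/2) + 2 W(non-qualifying | x)`. Averaged over `x`, the atypical part vanishes by
the definition of `Ī`, and by Markov's inequality the high-error part is at most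
`P(Ψ(Z^n, U^n) = 1) / γ`: by the Markov chain `U → X → Z`, drawing `u` from `W(·|X^n)` next to
`(X^n, Z^n)` reproduces the law of `(U^n, X^n, Z^n)`. Letting `γ = γ_n → 0` slowly makes every
term vanish.
-/

open Filter

noncomputable section

/-- A probability mass function on a finite type, given as a real-valued function. -/
def IsPMF {Ω : Type*} [Fintype Ω] (μ : Ω → ℝ) : Prop :=
  (∀ ω, 0 ≤ μ ω) ∧ ∑ ω, μ ω = 1

/-- Probability of an event under a pmf. -/
def prEv {Ω : Type*} [Fintype Ω] (μ : Ω → ℝ) (S : Set Ω) : ℝ :=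
  ∑ ω, S.indicator μ ω

/-- `p-limsup` of a sequence of real random variables `Z n` on finite sample spaces
with laws `μ n`. -/
def pLimsupF {Ω : ℕ → Type*} [∀ n, Fintype (Ω n)]
    (μ : ∀ n, Ω n → ℝ) (Z : ∀ n, Ω n → ℝ) : ℝ :=
  sInf {α : ℝ | Tendsto (fun n => prEv (μ n) {ω | α < Z n ω}) atTop (nhds 0)}

open Real Topology

section prEv

variable {Ω : Type*} [Fintype Ω] {μ : Ω → ℝ}

lemma prEv_nonneg (hμ : ∀ ω, 0 ≤ μ ω) (S : Set Ω) : 0 ≤ prEv μ S :=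
  Finset.sum_nonneg fun ω _ => Set.indicator_nonneg (fun ω _ => hμ ω) ω

lemma prEv_mono_of_pos (hμ : ∀ ω, 0 ≤ μ ω) {S T : Set Ω} (hST : ∀ ω ∈ S, 0 < μ ω → ω ∈ T) :
    prEv μ S ≤ prEv μ T := by
  classical
  refine Finset.sum_le_sum fun ω _ => ?_
  simp only [Set.indicator_apply]
  split_ifs with hS hT
  · exact le_rfl
  · exact not_lt.1 fun h => hT (hST ω hS h)
  · exact hμ ω
  · exact le_rfl

lemma prEv_union_le (hμ : ∀ ω, 0 ≤ μ ω) (S T : Set Ω) :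
    prEv μ (S ∪ T) ≤ prEv μ S + prEv μ T := by
  classical
  rw [prEv, prEv, prEv, ← Finset.sum_add_distrib]
  refine Finset.sum_le_sum fun ω _ => ?_
  simp only [Set.indicator_apply, Set.mem_union]
  split_ifs <;> simp_all

lemma prEv_le_card_mul {S : Set Ω} {c : ℝ} (hc : 0 ≤ c) (hS : ∀ ω ∈ S, μ ω ≤ c) :
    prEv μ S ≤ Fintype.card Ω * c := by
  classical
  rw [← nsmul_eq_mul, ← Finset.card_univ, ← Finset.sum_const]
  refine Finset.sum_le_sum fun ω _ => ?_
  simp only [Set.indicator_apply]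
  split_ifs with h
  exacts [hS ω h, hc]

lemma prEv_le_sum (hμ : ∀ ω, 0 ≤ μ ω) (S : Set Ω) : prEv μ S ≤ ∑ ω, μ ω :=
  Finset.sum_le_sum fun ω _ => Set.indicator_le_self' (fun ω _ => hμ ω) ω

lemma prEv_le_mul_prEv {ν : Ω → ℝ} {S : Set Ω} {E : ℝ} (h : ∀ ω ∈ S, μ ω ≤ E * ν ω) :
    prEv μ S ≤ E * prEv ν S := by
  classical
  rw [prEv, prEv, Finset.mul_sum]
  refine Finset.sum_le_sum fun ω _ => ?_
  simp only [Set.indicator_apply]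
  split_ifs with hω
  exacts [h ω hω, (mul_zero E).ge]

lemma mul_prEv_lt_le {g : Ω → ℝ} (hμ : ∀ ω, 0 ≤ μ ω) (hg : ∀ ω, 0 ≤ g ω) {γ : ℝ} (hγ : 0 < γ)
    (k : ℝ) : k * prEv μ {ω | γ * k < g ω} ≤ γ⁻¹ * ∑ ω, μ ω * g ω := by
  classical
  rw [prEv, Finset.mul_sum, Finset.mul_sum]
  refine Finset.sum_le_sum fun ω _ => ?_
  simp only [Set.indicator_apply, Set.mem_ofPred_eq]
  split_ifs with h
  · rw [mul_left_comm, mul_comm k]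
    exact mul_le_mul_of_nonneg_left ((le_inv_mul_iff₀ hγ).2 h.le) (hμ ω)
  · simpa using mul_nonneg (inv_nonneg.2 hγ.le) (mul_nonneg (hμ ω) (hg ω))

lemma sum_mul_prEv_comm {Ω' : Type*} [Fintype Ω'] (ν : Ω' → ℝ) (R : Ω' → Ω → Prop) :
    ∑ c, ν c * prEv μ {ω | R c ω} = ∑ ω, μ ω * prEv ν {c | R c ω} := by
  classical
  simp only [prEv, Finset.mul_sum]
  rw [Finset.sum_comm]
  refine Finset.sum_congr rfl fun ω _ => Finset.sum_congr rfl fun c _ => ?_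
  simp only [Set.indicator_apply, Set.mem_ofPred_eq]
  split_ifs <;> ring

lemma prEv_prod {α β : Type*} [Fintype α] [Fintype β] (μ : α × β → ℝ) (S : Set (α × β)) :
    prEv μ S = ∑ a, prEv (fun b => μ (a, b)) {b | (a, b) ∈ S} := by
  classical
  simp only [prEv, Fintype.sum_prod_type, Set.indicator_apply, Set.mem_ofPred_eq]

namespace IsPMF

lemma prEv_compl (hμ : IsPMF μ) (S : Set Ω) : prEv μ Sᶜ = 1 - prEv μ S := by
  simp [prEv, Set.indicator_compl, Finset.sum_sub_distrib, hμ.2]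

lemma prEv_le_one (hμ : IsPMF μ) (S : Set Ω) : prEv μ S ≤ 1 := by
  linarith [hμ.prEv_compl S, prEv_nonneg hμ.1 Sᶜ]

lemma le_one (hμ : IsPMF μ) (ω : Ω) : μ ω ≤ 1 :=
  hμ.2 ▸ Finset.single_le_sum (fun ω _ => hμ.1 ω) (Finset.mem_univ ω)

lemma exists_le_sum_mul (hμ : IsPMF μ) (F : Ω → ℝ) : ∃ ω, F ω ≤ ∑ ω', μ ω' * F ω' := by
  have : Nonempty Ω := by
    by_contra h
    rw [not_nonempty_iff] at h
    simpa using hμ.2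
  obtain ⟨ω, hω⟩ := Finite.exists_min F
  refine ⟨ω, ?_⟩
  calc F ω = ∑ ω', μ ω' * F ω := by rw [← Finset.sum_mul, hμ.2, one_mul]
    _ ≤ ∑ ω', μ ω' * F ω' :=
      Finset.sum_le_sum fun ω' _ => mul_le_mul_of_nonneg_left (hω ω') (hμ.1 ω')

lemma pi (hμ : IsPMF μ) (ι : Type*) [Fintype ι] [DecidableEq ι] :
    IsPMF fun c : ι → Ω => ∏ i, μ (c i) :=
  ⟨fun c => Finset.prod_nonneg fun i _ => hμ.1 _, by
    rw [← Fintype.prod_sum (fun _ : ι => μ), hμ.2, Finset.prod_const_one]⟩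

end IsPMF

lemma prEv_pi_forall_mem (ι : Type*) [Fintype ι] [DecidableEq ι] (T : Set Ω) :
    prEv (fun c : ι → Ω => ∏ i, μ (c i)) {c | ∀ i, c i ∈ T} = prEv μ T ^ Fintype.card ι := by
  classical
  simp only [prEv]
  rw [← Finset.card_univ, ← Finset.prod_const, Fintype.prod_sum (fun _ : ι => T.indicator μ)]
  refine Finset.sum_congr rfl fun c _ => ?_
  simp only [Set.indicator_apply, Set.mem_ofPred_eq]
  split_ifs with h
  · exact (Finset.prod_congr rfl fun i _ => if_pos (h i)).symm
  · obtain ⟨i, hi⟩ := not_forall.1 h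
    exact (Finset.prod_eq_zero (Finset.mem_univ i) (if_neg hi)).symm

end prEv

lemma exists_encoder_of_codebook {A B ι : Type*} (c : ι → B) (i₀ : ι) (G : A → Set B) :
    ∃ f : A → B, ∀ a, f a ∈ Set.range c ∧ (f a ∉ G a → ∀ i, c i ∉ G a) := by
  have (a : A) : ∃ b ∈ Set.range c, b ∉ G a → ∀ i, c i ∉ G a := by
    by_cases h : ∃ i, c i ∈ G a
    · obtain ⟨i, hi⟩ := h
      exact ⟨c i, ⟨i, rfl⟩, fun h' => absurd hi h'⟩
    · exact ⟨c i₀, ⟨i₀, rfl⟩, fun _ => not_exists.1 h⟩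
  choose f hf using this
  exact ⟨f, hf⟩

/-- Random coding: for `M` codewords drawn i.i.d. from `PU`, none lies in `G a` with probability
`(1 - PU (G a))^M`, and some codebook does no worse than the average over codebooks. -/
lemma exists_encoder_prEv_miss_le {A B : Type*} [Fintype A] [Fintype B] {PX : A → ℝ}
    (hPX : ∀ a, 0 ≤ PX a) {PU : B → ℝ} (hPU : IsPMF PU) (G : A → Set B) {M : ℕ} (hM : 0 < M) :
    ∃ (f : A → B) (cb : Finset B), (∀ a, f a ∈ cb) ∧ cb.card ≤ M ∧
      prEv PX {a | f a ∉ G a} ≤ ∑ a, PX a * (1 - prEv PU (G a)) ^ M := by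
  classical
  set ν : (Fin M → B) → ℝ := fun c => ∏ i, PU (c i)
  obtain ⟨code, hcode⟩ := (hPU.pi (Fin M)).exists_le_sum_mul fun c => prEv PX {a | ∀ i, c i ∉ G a}
  obtain ⟨f, hf⟩ := exists_encoder_of_codebook code ⟨0, hM⟩ G
  refine ⟨f, Finset.univ.image code, fun a => ?_, ?_, ?_⟩
  · obtain ⟨i, hi⟩ := (hf a).1
    exact hi ▸ Finset.mem_image_of_mem code (Finset.mem_univ i)
  · exact Finset.card_image_le.trans (by simp)
  · calc prEv PX {a | f a ∉ G a}
        ≤ prEv PX {a | ∀ i, code i ∉ G a} := prEv_mono_of_pos hPX fun a ha _ => (hf a).2 ha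
      _ ≤ ∑ c, ν c * prEv PX {a | ∀ i, c i ∉ G a} := hcode
      _ = ∑ a, PX a * prEv ν {c | ∀ i, c i ∉ G a} := sum_mul_prEv_comm _ _
      _ = ∑ a, PX a * (1 - prEv PU (G a)) ^ M := by
        refine Finset.sum_congr rfl fun a _ => ?_
        have h := prEv_pi_forall_mem (μ := PU) (Fin M) (G a)ᶜ
        rw [Fintype.card_fin] at h
        rw [← hPU.prEv_compl, ← h]
        rfl

lemma one_sub_pow_le_exp_add {q s t : ℝ} {M : ℕ} (hq0 : 0 ≤ q) (hq1 : q ≤ 1) (hs : 0 ≤ s)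
    (ht : 0 ≤ t) (h : t * (1 - s) ≤ M * q) : (1 - q) ^ M ≤ exp (-(t / 2)) + 2 * s := by
  rcases le_or_gt (1 / 2) s with hs2 | hs2
  · calc (1 - q) ^ M ≤ 1 := pow_le_one₀ (by linarith) (by linarith)
      _ ≤ exp (-(t / 2)) + 2 * s := by linarith [exp_pos (-(t / 2))]
  · calc (1 - q) ^ M ≤ exp (-q) ^ M :=
          pow_le_pow_left₀ (by linarith) (by linarith [add_one_le_exp (-q)]) M
      _ = exp (-(M * q)) := by rw [← exp_nat_mul, mul_neg]
      _ ≤ exp (-(t / 2)) := exp_le_exp.2 (by nlinarith [mul_le_mul_of_nonneg_left hs2.le ht])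
      _ ≤ exp (-(t / 2)) + 2 * s := by linarith

lemma prEv_decode_error_le {A B C : Type*} [Fintype A] [Fintype C] {P : A × C → ℝ}
    (hP : IsPMF P) (Ψ : C × B → Bool) (f : A → B) {γ : ℝ} (hγ : 0 ≤ γ)
    (G : A → Set B)
    (hG : ∀ a, ∀ b ∈ G a, prEv (fun c => P (a, c)) {c | Ψ (c, b) = true} ≤ γ * ∑ c, P (a, c)) :
    prEv P {p | Ψ (p.2, f p.1) = true} ≤ γ + prEv (fun a => ∑ c, P (a, c)) {a | f a ∉ G a} := by
  classical
  rw [prEv_prod]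
  calc ∑ a, prEv (fun c => P (a, c)) {c | Ψ (c, f a) = true}
      ≤ ∑ a, (γ * ∑ c, P (a, c) + {a | f a ∉ G a}.indicator (fun a => ∑ c, P (a, c)) a) := by
        refine Finset.sum_le_sum fun a _ => ?_
        by_cases h : f a ∈ G a
        · simpa [h] using hG a (f a) h
        · simp only [Set.indicator_of_mem (show a ∈ {a | f a ∉ G a} from h)]
          have := mul_nonneg hγ (Finset.sum_nonneg fun c _ => hP.1 (a, c) : 0 ≤ ∑ c, P (a, c))
          linarith [prEv_le_sum (fun c => hP.1 (a, c)) {c | Ψ (c, f a) = true}]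
    _ = γ + prEv (fun a => ∑ c, P (a, c)) {a | f a ∉ G a} := by
        rw [Finset.sum_add_distrib, ← Finset.mul_sum, ← Fintype.sum_prod_type, hP.2, mul_one]
        rfl

section MarkovChain

variable {A B C : Type*} [Fintype A] [Fintype B] [Fintype C] {P : A × C → ℝ} {W : A → B → ℝ}
  {μ : B × A × C → ℝ} {PU : B → ℝ}

lemma prEv_joint_eq (hμ : ∀ b a c, μ (b, a, c) = P (a, c) * W a b) (S : Set (B × A × C)) :
    prEv μ S = ∑ a, ∑ b, W a b * prEv (fun c => P (a, c)) {c | (b, a, c) ∈ S} := by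
  classical
  simp only [prEv, Fintype.sum_prod_type, Finset.mul_sum]
  rw [Finset.sum_comm]
  refine Finset.sum_congr rfl fun a _ => Finset.sum_congr rfl fun b _ =>
    Finset.sum_congr rfl fun c _ => ?_
  simp only [Set.indicator_apply, Set.mem_ofPred_eq, hμ]
  split_ifs <;> ring

lemma prEv_joint_fst_mem (hμ : ∀ b a c, μ (b, a, c) = P (a, c) * W a b) (T : A → Set B) :
    prEv μ {ω | ω.1 ∈ T ω.2.1} = ∑ a, (∑ c, P (a, c)) * prEv (W a) (T a) := by
  classical
  rw [prEv_joint_eq hμ]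
  refine Finset.sum_congr rfl fun a _ => ?_
  rw [prEv, Finset.mul_sum]
  refine Finset.sum_congr rfl fun b _ => ?_
  by_cases hb : b ∈ T a <;> simp [prEv, hb, mul_comm]

lemma isPMF_marginal (hP : IsPMF P) (hW : ∀ a, IsPMF (W a))
    (hPU : ∀ b, PU b = ∑ a, (∑ c, P (a, c)) * W a b) : IsPMF PU := by
  refine ⟨fun b => ?_, ?_⟩
  · rw [hPU]
    exact Finset.sum_nonneg fun a _ =>
      mul_nonneg (Finset.sum_nonneg fun c _ => hP.1 _) ((hW a).1 b)
  · simp_rw [hPU]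
    rw [Finset.sum_comm]
    simp_rw [← Finset.mul_sum, (hW _).2, mul_one, ← Fintype.sum_prod_type, hP.2]

lemma joint_nonneg (hP : IsPMF P) (hW : ∀ a, IsPMF (W a))
    (hμ : ∀ b a c, μ (b, a, c) = P (a, c) * W a b) (ω : B × A × C) : 0 ≤ μ ω := by
  obtain ⟨b, a, c⟩ := ω
  exact hμ b a c ▸ mul_nonneg (hP.1 _) ((hW a).1 b)

lemma joint_le_marginal (hP : IsPMF P) (hW : ∀ a, IsPMF (W a))
    (hμ : ∀ b a c, μ (b, a, c) = P (a, c) * W a b) (hPU : ∀ b, PU b = ∑ a, (∑ c, P (a, c)) * W a b)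
    (ω : B × A × C) : μ ω ≤ PU ω.1 := by
  obtain ⟨b, a, c⟩ := ω
  rw [hμ, hPU]
  calc P (a, c) * W a b ≤ (∑ c', P (a, c')) * W a b :=
        mul_le_mul_of_nonneg_right
          (Finset.single_le_sum (fun c' _ => hP.1 (a, c')) (Finset.mem_univ c)) ((hW a).1 b)
    _ ≤ ∑ a', (∑ c', P (a', c')) * W a' b :=
        Finset.single_le_sum (f := fun a' => (∑ c', P (a', c')) * W a' b)
          (fun a' _ => mul_nonneg (Finset.sum_nonneg fun c _ => hP.1 _) ((hW a').1 b))
          (Finset.mem_univ a)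

lemma lt_infoDensity_iff (hP : IsPMF P) (hW : ∀ a, IsPMF (W a))
    (hμ : ∀ b a c, μ (b, a, c) = P (a, c) * W a b) (hPU : ∀ b, PU b = ∑ a, (∑ c, P (a, c)) * W a b)
    {ω : B × A × C} (hω : 0 < μ ω) {N : ℝ} (hN : 0 < N) (β : ℝ) :
    β < 1 / N * log (W ω.2.1 ω.1 / PU ω.1) ↔ exp (N * β) * PU ω.1 < W ω.2.1 ω.1 := by
  obtain ⟨b, a, c⟩ := ω
  have hPUb : 0 < PU b := hω.trans_le (joint_le_marginal hP hW hμ hPU _)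
  have hWab : 0 < W a b := by
    refine ((hW a).1 b).lt_of_ne fun h => hω.ne' ?_
    rw [hμ, ← h, mul_zero]
  rw [one_div_mul_eq_div, lt_div_iff₀' hN, lt_log_iff_exp_lt (div_pos hWab hPUb),
    lt_div_iff₀ hPUb]

lemma prEv_exp_mul_lt_le (hP : IsPMF P) (hW : ∀ a, IsPMF (W a))
    (hμ : ∀ b a c, μ (b, a, c) = P (a, c) * W a b) (hPU : ∀ b, PU b = ∑ a, (∑ c, P (a, c)) * W a b)
    {N : ℝ} (hN : 0 < N) (β : ℝ) :
    prEv μ {ω | exp (N * β) * PU ω.1 < W ω.2.1 ω.1} ≤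
      prEv μ {ω | β < 1 / N * log (W ω.2.1 ω.1 / PU ω.1)} :=
  prEv_mono_of_pos (joint_nonneg hP hW hμ) fun _ hω hpos =>
    (lt_infoDensity_iff hP hW hμ hPU hpos hN β).2 hω

lemma prEv_infoDensity_gt_le (hP : IsPMF P) (hW : ∀ a, IsPMF (W a))
    (hμ : ∀ b a c, μ (b, a, c) = P (a, c) * W a b) (hPU : ∀ b, PU b = ∑ a, (∑ c, P (a, c)) * W a b)
    {N : ℝ} (hN : 0 < N) (β : ℝ) :
    prEv μ {ω | β < 1 / N * log (W ω.2.1 ω.1 / PU ω.1)} ≤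
      Fintype.card (B × A × C) * exp (-(N * β)) := by
  refine prEv_le_card_mul (exp_pos _).le fun ω hω => ?_
  rcases (joint_nonneg hP hW hμ ω).eq_or_lt with h | h
  · exact h ▸ (exp_pos _).le
  have hlt := (lt_infoDensity_iff hP hW hμ hPU h hN β).1 hω
  calc μ ω ≤ PU ω.1 := joint_le_marginal hP hW hμ hPU ω
    _ ≤ exp (-(N * β)) := by
      rw [exp_neg, inv_eq_one_div, le_div_iff₀' (exp_pos _)]
      exact hlt.le.trans ((hW _).le_one _)

lemma sum_mul_prEv_compl_le (hP : IsPMF P) (hW : ∀ a, IsPMF (W a))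
    (hμ : ∀ b a c, μ (b, a, c) = P (a, c) * W a b) (Ψ : C × B → Bool) (E : ℝ) {γ : ℝ}
    (hγ : 0 < γ) :
    ∑ a, (∑ c, P (a, c)) * prEv (W a)
        ({b | W a b ≤ E * PU b} ∩
          {b | prEv (fun c => P (a, c)) {c | Ψ (c, b) = true} ≤ γ * ∑ c, P (a, c)})ᶜ ≤
      prEv μ {ω | E * PU ω.1 < W ω.2.1 ω.1} + γ⁻¹ * prEv μ {ω | Ψ (ω.2.2, ω.1) = true} := by
  set e : A → B → ℝ := fun a b => prEv (fun c => P (a, c)) {c | Ψ (c, b) = true}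
  have hPX (a : A) : 0 ≤ ∑ c, P (a, c) := Finset.sum_nonneg fun c _ => hP.1 (a, c)
  calc _ ≤ ∑ a, ((∑ c, P (a, c)) * prEv (W a) {b | E * PU b < W a b} +
          (∑ c, P (a, c)) * prEv (W a) {b | γ * ∑ c, P (a, c) < e a b}) := by
        refine Finset.sum_le_sum fun a _ => ?_
        rw [← mul_add]
        refine mul_le_mul_of_nonneg_left ((prEv_mono_of_pos (hW a).1 fun b hb _ => ?_).trans
          (prEv_union_le (hW a).1 _ _)) (hPX a)
        simp only [Set.mem_compl_iff, Set.mem_inter_iff, Set.mem_ofPred_eq] at hb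
        simp only [Set.mem_union, Set.mem_ofPred_eq]
        rcases not_and_or.1 hb with h | h
        exacts [Or.inl (not_le.1 h), Or.inr (not_le.1 h)]
    _ ≤ prEv μ {ω | E * PU ω.1 < W ω.2.1 ω.1} + ∑ a, γ⁻¹ * ∑ b, W a b * e a b := by
        rw [Finset.sum_add_distrib, ← prEv_joint_fst_mem hμ fun a => {b | E * PU b < W a b}]
        refine add_le_add le_rfl (Finset.sum_le_sum fun a _ => ?_)
        exact mul_prEv_lt_le (hW a).1 (fun b => prEv_nonneg (fun c => hP.1 (a, c)) _) hγ _
    _ = prEv μ {ω | E * PU ω.1 < W ω.2.1 ω.1} + γ⁻¹ * prEv μ {ω | Ψ (ω.2.2, ω.1) = true} := by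
        rw [← Finset.mul_sum, prEv_joint_eq hμ {ω | Ψ (ω.2.2, ω.1) = true}]
        rfl

/-- The encoder maps `a` to a codeword `b` with `W a b ≤ E * PU b` and conditional `Ψ`-error at
most `γ`, whenever the codebook contains one. -/
theorem exists_encoder_prEv_error_le (hP : IsPMF P) (hW : ∀ a, IsPMF (W a))
    (hμ : ∀ b a c, μ (b, a, c) = P (a, c) * W a b) (hPU : ∀ b, PU b = ∑ a, (∑ c, P (a, c)) * W a b)
    (Ψ : C × B → Bool) {M : ℕ} (hM : 0 < M) {E γ t : ℝ} (hγ : 0 < γ) (ht : 0 ≤ t)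
    (htE : t * E ≤ M) :
    ∃ (f : A → B) (cb : Finset B), (∀ a, f a ∈ cb) ∧ cb.card ≤ M ∧
      prEv P {p | Ψ (p.2, f p.1) = true} ≤ γ + exp (-(t / 2)) +
        2 * prEv μ {ω | E * PU ω.1 < W ω.2.1 ω.1} +
        2 * (prEv μ {ω | Ψ (ω.2.2, ω.1) = true} / γ) := by
  set PX : A → ℝ := fun a => ∑ c, P (a, c)
  have hPX (a : A) : 0 ≤ PX a := Finset.sum_nonneg fun c _ => hP.1 (a, c)
  have hPXsum : ∑ a, PX a = 1 := by rw [← Fintype.sum_prod_type', hP.2]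
  have hPU' := isPMF_marginal hP hW hPU
  set G : A → Set B := fun a => {b | W a b ≤ E * PU b} ∩
    {b | prEv (fun c => P (a, c)) {c | Ψ (c, b) = true} ≤ γ * PX a}
  have hcover (a : A) : (1 - prEv PU (G a)) ^ M ≤ exp (-(t / 2)) + 2 * prEv (W a) (G a)ᶜ := by
    refine one_sub_pow_le_exp_add (prEv_nonneg hPU'.1 _) (hPU'.prEv_le_one _)
      (prEv_nonneg (hW a).1 _) ht ?_
    have hWG : prEv (W a) (G a) ≤ E * prEv PU (G a) := prEv_le_mul_prEv fun b hb => hb.1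
    rw [(hW a).prEv_compl, sub_sub_cancel]
    calc t * prEv (W a) (G a) ≤ t * E * prEv PU (G a) := by
          rw [mul_assoc]; exact mul_le_mul_of_nonneg_left hWG ht
      _ ≤ M * prEv PU (G a) := mul_le_mul_of_nonneg_right htE (prEv_nonneg hPU'.1 _)
  obtain ⟨f, cb, hf, hcb, hmiss⟩ := exists_encoder_prEv_miss_le hPX hPU' G hM
  refine ⟨f, cb, hf, hcb, ?_⟩
  calc prEv P {p | Ψ (p.2, f p.1) = true} ≤ γ + prEv PX {a | f a ∉ G a} :=
        prEv_decode_error_le hP Ψ f hγ.le G fun a b hb => hb.2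
    _ ≤ γ + ∑ a, PX a * (exp (-(t / 2)) + 2 * prEv (W a) (G a)ᶜ) :=
        add_le_add le_rfl (hmiss.trans (Finset.sum_le_sum fun a _ =>
          mul_le_mul_of_nonneg_left (hcover a) (hPX a)))
    _ = γ + exp (-(t / 2)) + 2 * ∑ a, PX a * prEv (W a) (G a)ᶜ := by
        simp only [mul_add, Finset.sum_add_distrib, ← Finset.sum_mul, hPXsum, Finset.mul_sum,
          mul_left_comm (PX _) 2, one_mul, add_assoc]
    _ ≤ γ + exp (-(t / 2)) + 2 * (prEv μ {ω | E * PU ω.1 < W ω.2.1 ω.1} +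
          γ⁻¹ * prEv μ {ω | Ψ (ω.2.2, ω.1) = true}) := by
        gcongr
        exact sum_mul_prEv_compl_le hP hW hμ Ψ E hγ
    _ = _ := by ring

end MarkovChain

lemma tendsto_prEv_lt_of_pLimsupF_lt {Ω : ℕ → Type*} [∀ n, Fintype (Ω n)] {μ : ∀ n, Ω n → ℝ}
    (hμ : ∀ n ω, 0 ≤ μ n ω) {Z : ∀ n, Ω n → ℝ}
    (hZ : ∃ β, Tendsto (fun n => prEv (μ n) {ω | β < Z n ω}) atTop (𝓝 0)) {α : ℝ}
    (hα : pLimsupF μ Z < α) : Tendsto (fun n => prEv (μ n) {ω | α < Z n ω}) atTop (𝓝 0) := by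
  set S := {β : ℝ | Tendsto (fun n => prEv (μ n) {ω | β < Z n ω}) atTop (𝓝 0)}
  -- if `S` is unbounded below, `sInf S = 0` is a junk value, but then `S` reaches below `α` anyway
  obtain ⟨β, hβS, hβα⟩ : ∃ β ∈ S, β < α := by
    by_cases hS : BddBelow S
    · exact (csInf_lt_iff hS hZ).1 hα
    · exact not_bddBelow_iff.1 hS α
  refine squeeze_zero' (Eventually.of_forall fun n => prEv_nonneg (hμ n) _)
    (Eventually.of_forall fun n => prEv_mono_of_pos (hμ n) fun ω hω _ => ?_) hβS
  exact hβα.trans hω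

lemma exists_tendsto_prEv_infoDensity_gt {𝒵 𝒳 𝒰 : Type*} [Fintype 𝒵] [Fintype 𝒳] [Fintype 𝒰]
    {PXZ : ∀ n : ℕ, (Fin n → 𝒳) × (Fin n → 𝒵) → ℝ} (hPXZ : ∀ n, IsPMF (PXZ n))
    {W : ∀ n : ℕ, (Fin n → 𝒳) → (Fin n → 𝒰) → ℝ} (hW : ∀ n x, IsPMF (W n x))
    {μ : ∀ n : ℕ, (Fin n → 𝒰) × (Fin n → 𝒳) × (Fin n → 𝒵) → ℝ}
    (hμ : ∀ n u x z, μ n (u, x, z) = PXZ n (x, z) * W n x u) {PU : ∀ n : ℕ, (Fin n → 𝒰) → ℝ}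
    (hPU : ∀ n u, PU n u = ∑ x, (∑ z, PXZ n (x, z)) * W n x u) :
    ∃ β, Tendsto (fun n => prEv (μ n)
      {ω | β < 1 / (n : ℝ) * log (W n ω.2.1 ω.1 / PU n ω.1)}) atTop (𝓝 0) := by
  set k : ℝ := (Fintype.card (𝒰 × 𝒳 × 𝒵) : ℝ)
  have hk : k * exp (-k) < 1 := by
    rw [exp_neg, ← div_eq_mul_inv, div_lt_one (exp_pos k)]
    linarith [add_one_le_exp k]
  refine ⟨k, squeeze_zero' (Eventually.of_forall fun n =>
    prEv_nonneg (joint_nonneg (hPXZ n) (hW n) (hμ n)) _) ?_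
    (tendsto_pow_atTop_nhds_zero_of_lt_one (by positivity) hk)⟩
  filter_upwards [eventually_gt_atTop 0] with n hn
  refine (prEv_infoDensity_gt_le (hPXZ n) (hW n) (hμ n) (hPU n) (Nat.cast_pos.2 hn) k).trans_eq ?_
  simp only [k, Fintype.card_prod, Fintype.card_fun, Fintype.card_fin, Nat.cast_mul, Nat.cast_pow,
    mul_pow, ← exp_nat_mul, mul_neg]

lemma exists_pos_tendsto_zero_div {δ : ℕ → ℝ} (hδ0 : ∀ n, 0 ≤ δ n)
    (hδ : Tendsto δ atTop (𝓝 0)) :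
    ∃ γ : ℕ → ℝ, (∀ n, 0 < γ n) ∧ Tendsto γ atTop (𝓝 0) ∧
      Tendsto (fun n => δ n / γ n) atTop (𝓝 0) := by
  -- `γ n ≥ √(δ n)` gives `δ n / γ n ≤ γ n`, while `1 / (n + 1)` keeps `γ n > 0`
  set γ : ℕ → ℝ := fun n => √(δ n + 1 / (n + 1))
  have hγ (n : ℕ) : 0 < γ n := sqrt_pos.2 (add_pos_of_nonneg_of_pos (hδ0 n) Nat.one_div_pos_of_nat)
  have hγlim : Tendsto γ atTop (𝓝 0) := by
    simpa only [add_zero, sqrt_zero] using (hδ.add tendsto_one_div_add_atTop_nhds_zero_nat).sqrt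
  refine ⟨γ, hγ, hγlim, squeeze_zero (fun n => div_nonneg (hδ0 n) (hγ n).le) (fun n => ?_) hγlim⟩
  rw [div_le_iff₀ (hγ n), ← sq, sq_sqrt (add_nonneg (hδ0 n) Nat.one_div_pos_of_nat.le)]
  exact le_add_of_nonneg_right Nat.one_div_pos_of_nat.le

/-- **Lemma (Iwata–Muramatsu).** If `U^n → X^n → Z^n` is a Markov chain (here `U^n` is
generated from `X^n` by the conditional pmf `W n`, and `(X^n, Z^n)` has joint law `PXZ n`)
and `Ψ n` is a sequence of binary maps with `P(Ψ n (Z^n, U^n) = 1) → 0`, then for every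
`ε > 0` there are deterministic maps `f n : 𝒳^n → 𝒰^n` whose range has at most
`⌈e^{n(Ī(U;X)+ε)}⌉` elements and with `P(Ψ n (Z^n, f n (X^n)) = 1) → 0`. -/
theorem iwata_muramatsu_lemma
    {𝒵 𝒳 𝒰 : Type*} [Fintype 𝒵] [Fintype 𝒳] [Fintype 𝒰]
    (PXZ : ∀ n : ℕ, (Fin n → 𝒳) × (Fin n → 𝒵) → ℝ) (hPXZ : ∀ n, IsPMF (PXZ n))
    (W : ∀ n : ℕ, (Fin n → 𝒳) → (Fin n → 𝒰) → ℝ) (hW : ∀ n x, IsPMF (W n x))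
    -- joint law of (U^n, X^n, Z^n); the factorization encodes the Markov chain U → X → Z
    (μ : ∀ n : ℕ, (Fin n → 𝒰) × (Fin n → 𝒳) × (Fin n → 𝒵) → ℝ)
    (hμ : ∀ n u x z, μ n (u, x, z) = PXZ n (x, z) * W n x u)
    -- marginal law of U^n
    (PU : ∀ n : ℕ, (Fin n → 𝒰) → ℝ)
    (hPU : ∀ n u, PU n u = ∑ x, (∑ z, PXZ n (x, z)) * W n x u)
    (Ψ : ∀ n : ℕ, (Fin n → 𝒵) × (Fin n → 𝒰) → Bool)
    (hΨ : Tendsto (fun n => prEv (μ n) {ω | Ψ n (ω.2.2, ω.1) = true}) atTop (nhds 0)) :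
    ∀ ε > (0 : ℝ), ∃ (f : ∀ n : ℕ, (Fin n → 𝒳) → (Fin n → 𝒰))
      (Cb : ∀ n : ℕ, Finset (Fin n → 𝒰)),
      (∀ n x, f n x ∈ Cb n) ∧
      (∀ n : ℕ, (Cb n).card ≤
        ⌈Real.exp (n * (pLimsupF μ
          (fun n ω => (1 / (n : ℝ)) * Real.log (W n ω.2.1 ω.1 / PU n ω.1)) + ε))⌉₊) ∧
      Tendsto (fun n => prEv (PXZ n) {p | Ψ n (p.2, f n p.1) = true}) atTop (nhds 0) := by
  intro ε hε
  set I := pLimsupF μ fun n ω => (1 / (n : ℝ)) * Real.log (W n ω.2.1 ω.1 / PU n ω.1)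
  have hμ0 (n : ℕ) := joint_nonneg (hPXZ n) (hW n) (hμ n)
  have htyp : Tendsto (fun n => prEv (μ n)
      {ω | I + ε / 2 < 1 / (n : ℝ) * log (W n ω.2.1 ω.1 / PU n ω.1)}) atTop (𝓝 0) :=
    tendsto_prEv_lt_of_pLimsupF_lt hμ0 (exists_tendsto_prEv_infoDensity_gt hPXZ hW hμ hPU)
      (by linarith)
  obtain ⟨γ, hγ, hγlim, hδγ⟩ := exists_pos_tendsto_zero_div (fun n => prEv_nonneg (hμ0 n) _) hΨ
  have hMt (n : ℕ) : exp (n * (ε / 2)) * exp (n * (I + ε / 2)) ≤ ⌈exp (n * (I + ε))⌉₊ := by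
    rw [← exp_add, ← mul_add, add_left_comm, add_halves]
    exact Nat.le_ceil _
  choose f Cb hf hCb herr using fun n => exists_encoder_prEv_error_le (hPXZ n) (hW n) (hμ n)
    (hPU n) (Ψ n) (Nat.ceil_pos.2 (exp_pos _)) (hγ n) (exp_pos _).le (hMt n)
  have hexp : Tendsto (fun n : ℕ => exp (-(exp (n * (ε / 2)) / 2))) atTop (𝓝 0) :=
    tendsto_exp_neg_atTop_nhds_zero.comp <| (tendsto_exp_atTop.comp <|
      tendsto_natCast_atTop_atTop.atTop_mul_const (half_pos hε)).atTop_div_const two_pos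
  refine ⟨f, Cb, hf, hCb, squeeze_zero' (Eventually.of_forall fun n => prEv_nonneg (hPXZ n).1 _)
    ((eventually_gt_atTop 0).mono fun n hn => (herr n).trans <| add_le_add_left (add_le_add_right
      (mul_le_mul_of_nonneg_left (prEv_exp_mul_lt_le (hPXZ n) (hW n) (hμ n) (hPU n)
        (Nat.cast_pos.2 hn) (I + ε / 2)) zero_le_two) _) _) ?_⟩
  simpa using ((hγlim.add hexp).add (htyp.const_mul 2)).add (hδγ.const_mul 2)

end
end

section
/- Let 𝒰 and 𝒴 be finite alphabets, n ≥ 1, and let P be a PMF on 𝒰^n × 𝒴^n with marginals P_U, P_Y and conditionals P_{U|Y}, P_{Y|U}. Let r > 0, r' ∈ ℝ, r̄₀ ∈ ℝ, ε > 0, and define T² = {(y,u) ∈ 𝒴^n × 𝒰^n : P_U(u) > 0, P_Y(y) > 0, and (1/n) log(P_{U|Y}(u|y)/P_U(u)) > r' − ε}. Let C ⊆ 𝒰^n be a codebook with |C| ≤ e^{n r̄₀}, let M₂ be an integer with M₂ ≥ e^{n r}, and let (B(u))_{u∈C} be bin indices, i.i.d. uniform on {1,…,M₂}. Let u* be a random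 element of C and Y a random element of 𝒴^n with law P_Y, such that the collection (B(u'))_{u' ∈ C, u' ≠ u*} is independent of the pair (Y, u*). Then P(∃ u' ∈ C with u' ≠ u*, B(u') = B(u*), and (Y, u') ∈ T²) ≤ e^{−n(r + r' − r̄₀ − ε)}. -/
/-!
A union bound over the codewords `u' ≠ u*` of `C`. Since the bins are uniform and independent
of `(u*, Y)`, each such `u'` lands in the bin of `u*` with probability `1 / M₂ ≤ e^{-nr}`,
independently of whether `(Y, u') ∈ T²`. For fixed `u'`, every `y` with `(y, u') ∈ T²`
satisfies `P_Y(y) < e^{-n(r'-ε)} P_{Y|U}(y|u')`, so these `y` carry `P_Y`-mass at most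
`e^{-n(r'-ε)}`. Summing over the at most `e^{n r̄₀}` codewords gives the bound.
-/

open Filter

noncomputable section

open Finset

section prEv

variable {Ω : Type*} [Fintype Ω]

lemma prEv_mono {μ : Ω → ℝ} (hμ : ∀ ω, 0 ≤ μ ω) {S T : Set Ω} (hST : S ⊆ T) :
    prEv μ S ≤ prEv μ T :=
  sum_le_sum fun ω _ => Set.indicator_le_indicator_of_subset hST hμ ω

lemma prEv_le_one {μ : Ω → ℝ} (hμ : IsPMF μ) (S : Set Ω) : prEv μ S ≤ 1 := by
  calc prEv μ S ≤ prEv μ Set.univ := prEv_mono hμ.1 (Set.subset_univ S)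
    _ = 1 := by simpa [prEv] using hμ.2

lemma prEv_setOf_exists_le {ι : Type*} [Fintype ι] {μ : Ω → ℝ} (hμ : ∀ ω, 0 ≤ μ ω)
    (p : ι → Ω → Prop) :
    prEv μ {ω | ∃ i, p i ω} ≤ ∑ i, prEv μ {ω | p i ω} := by
  simp only [prEv]
  rw [sum_comm]
  refine sum_le_sum fun ω _ => ?_
  have hnn : ∀ j, 0 ≤ {ω | p j ω}.indicator μ ω :=
    fun j => Set.indicator_nonneg (fun ω _ => hμ ω) ω
  by_cases h : ∃ i, p i ω
  · obtain ⟨i, hi⟩ := h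
    calc {ω | ∃ i, p i ω}.indicator μ ω = μ ω :=
          Set.indicator_of_mem (show ω ∈ {ω | ∃ i, p i ω} from ⟨i, hi⟩) μ
      _ = {ω | p i ω}.indicator μ ω := (Set.indicator_of_mem hi μ).symm
      _ ≤ ∑ j, {ω | p j ω}.indicator μ ω := single_le_sum (fun j _ => hnn j) (mem_univ i)
  · rw [Set.indicator_of_notMem (show ω ∉ {ω | ∃ i, p i ω} from h)]
    exact sum_nonneg fun j _ => hnn j

end prEv

lemma prEv_setOf_snd_mem {α γ : Type*} [Fintype α] [Fintype γ] (ν : α × γ → ℝ) (A : Set γ) :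
    prEv ν {p | p.2 ∈ A} = prEv (fun y => ∑ u, ν (u, y)) A := by
  classical
  simp only [prEv, Set.indicator_apply, Fintype.sum_prod_type_right]
  exact sum_congr rfl fun y _ => by by_cases hy : y ∈ A <;> simp [hy]

lemma IsPMF.sum_fst {α β : Type*} [Fintype α] [Fintype β] {P : α × β → ℝ} (hP : IsPMF P) :
    IsPMF fun y => ∑ u, P (u, y) :=
  ⟨fun y => sum_nonneg fun u _ => hP.1 (u, y), by rw [← Fintype.sum_prod_type_right]; exact hP.2⟩

lemma prEv_uniform_prod {β γ : Type*} [Fintype β] [Fintype γ] (ν : γ → ℝ)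
    (S : Set (β × γ)) [DecidablePred (· ∈ S)] :
    prEv (fun ω => ν ω.2 / Fintype.card β) S
      = ∑ p, ν p * (#{b | (b, p) ∈ S} / Fintype.card β) := by
  rw [prEv, Fintype.sum_prod_type_right]
  refine sum_congr rfl fun p _ => ?_
  simp only [Set.indicator_apply, sum_ite, sum_const_zero, add_zero, sum_const, nsmul_eq_mul]
  ring

def funEqAtEquiv {ι β : Type*} [DecidableEq ι] {i j : ι} (hij : i ≠ j) :
    {b : ι → β // b i = b j} ≃ ({k // k ≠ i} → β) where
  toFun b k := b.1 k
  invFun g := ⟨fun k => if h : k = i then g ⟨j, hij.symm⟩ else g ⟨k, h⟩, by simp [hij.symm]⟩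
  left_inv b := by
    ext k
    by_cases h : k = i
    · subst h; simp [b.2]
    · simp [h]
  right_inv g := by
    ext k
    simp [k.2]

lemma card_filter_apply_eq_apply {ι β : Type*} [Fintype ι] [DecidableEq ι] [Fintype β]
    [DecidableEq β] {i j : ι} (hij : i ≠ j) :
    #{b : ι → β | b i = b j} = Fintype.card β ^ (Fintype.card ι - 1) := by
  rw [← Fintype.card_subtype, Fintype.card_congr (funEqAtEquiv hij), Fintype.card_fun,
    Fintype.card_subtype_compl, Fintype.card_subtype_eq]

lemma card_filter_apply_eq_apply_div {ι β : Type*} [Fintype ι] [DecidableEq ι] [Fintype β]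
    [DecidableEq β] [Nonempty β] {i j : ι} (hij : i ≠ j) :
    (#{b : ι → β | b i = b j} : ℝ) / Fintype.card (ι → β) = 1 / Fintype.card β := by
  have hι : 1 ≤ Fintype.card ι := Fintype.card_pos_iff.mpr ⟨i⟩
  rw [card_filter_apply_eq_apply hij, Fintype.card_fun, ← Nat.sub_add_cancel hι, pow_succ,
    Nat.add_sub_cancel]
  push_cast
  field_simp

lemma prEv_bin_collision_le {α γ : Type*} [Fintype α] [Fintype γ] [DecidableEq α]
    {C : Finset α} {M : ℕ} [NeZero M] {ν : α × γ → ℝ} (hν : ∀ p, 0 ≤ ν p) (u' : C)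
    (A : Set γ) :
    prEv (fun ω : (C → Fin M) × (α × γ) => ν ω.2 / Fintype.card (C → Fin M))
        {ω | (u' : α) ≠ ω.2.1 ∧ (∃ h : ω.2.1 ∈ C, ω.1 u' = ω.1 ⟨ω.2.1, h⟩) ∧ ω.2.2 ∈ A}
      ≤ prEv ν {p | p.2 ∈ A} / M := by
  classical
  rw [prEv_uniform_prod, prEv, sum_div]
  refine sum_le_sum fun p _ => ?_
  by_cases hp : (u' : α) ≠ p.1 ∧ p.1 ∈ C ∧ p.2 ∈ A
  · obtain ⟨hne, hC, hA⟩ := hp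
    have hcollision : u' ≠ ⟨p.1, hC⟩ := fun h => hne (congrArg Subtype.val h)
    have hA' : p ∈ {q : α × γ | q.2 ∈ A} := hA
    rw [filter_congr (q := fun b : C → Fin M => b u' = b ⟨p.1, hC⟩) (by simp [hne, hC, hA]),
      card_filter_apply_eq_apply_div hcollision, Set.indicator_of_mem hA', Fintype.card_fin,
      mul_one_div]
  · rw [filter_false_of_mem fun b _ ⟨hne, ⟨hC, _⟩, hA⟩ => hp ⟨hne, hC, hA⟩, card_empty,
      Nat.cast_zero, zero_div, mul_zero]
    exact div_nonneg (Set.indicator_nonneg (fun q _ => hν q) p) M.cast_nonneg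

lemma prEv_informationDensity_gt_le {α β : Type*} [Fintype α] [Fintype β] {P : α × β → ℝ}
    (hP : IsPMF P) {PU : α → ℝ} (hPU : ∀ u, PU u = ∑ y, P (u, y)) {PY : β → ℝ}
    (hPY : ∀ y, PY y = ∑ u, P (u, y)) (s : ℝ) (u : α) :
    prEv PY {y | 0 < PU u ∧ 0 < PY y ∧ s < Real.log (P (u, y) / (PY y * PU u))}
      ≤ Real.exp (-s) := by
  have hPY_pmf : IsPMF PY := by
    rw [show PY = fun y => ∑ u, P (u, y) from funext hPY]
    exact hP.sum_fst
  rcases lt_or_ge s 0 with hs | hs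
  · exact (prEv_le_one hPY_pmf _).trans (Real.one_le_exp (by linarith))
  have hPU0 : 0 ≤ PU u := by rw [hPU]; exact sum_nonneg fun y _ => hP.1 _
  set S := {y | 0 < PU u ∧ 0 < PY y ∧ s < Real.log (P (u, y) / (PY y * PU u))}
  -- on `S`, `P_Y(y) < e^{-s} P_{Y|U}(y|u)`, and `P_{Y|U}(·|u)` has total mass at most 1
  have hpointwise (y) : S.indicator PY y ≤ Real.exp (-s) * (P (u, y) / PU u) := by
    by_cases hy : y ∈ S
    · rw [Set.indicator_of_mem hy]
      obtain ⟨hU, hY, hlog⟩ := hy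
      have hratio : 1 < P (u, y) / (PY y * PU u) :=
        (Real.log_pos_iff (div_nonneg (hP.1 _) (by positivity))).mp (hs.trans_lt hlog)
      have hexp := (Real.lt_log_iff_exp_lt (one_pos.trans hratio)).mp hlog
      rw [lt_div_iff₀ (by positivity)] at hexp
      rw [Real.exp_neg, ← div_eq_inv_mul, le_div_iff₀ (Real.exp_pos s), le_div_iff₀ hU]
      linarith
    · rw [Set.indicator_of_notMem hy]
      exact mul_nonneg (Real.exp_nonneg _) (div_nonneg (hP.1 _) hPU0)
  calc _ ≤ ∑ y, Real.exp (-s) * (P (u, y) / PU u) := sum_le_sum fun y _ => hpointwise y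
    _ = Real.exp (-s) * (PU u / PU u) := by rw [← mul_sum, ← sum_div, hPU]
    _ ≤ Real.exp (-s) := mul_le_of_le_one_right (Real.exp_nonneg _) (div_self_le_one _)

lemma prEv_informationDensity_div_gt_le {α β : Type*} [Fintype α] [Fintype β]
    {P : α × β → ℝ} (hP : IsPMF P) {PU : α → ℝ} (hPU : ∀ u, PU u = ∑ y, P (u, y))
    {PY : β → ℝ} (hPY : ∀ y, PY y = ∑ u, P (u, y)) {n : ℕ} (hn : 1 ≤ n) (c : ℝ) (u : α) :
    prEv PY {y | 0 < PU u ∧ 0 < PY y ∧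
        c < (1 / (n : ℝ)) * Real.log (P (u, y) / (PY y * PU u))}
      ≤ Real.exp (-(n * c)) := by
  refine le_trans (prEv_mono (fun y => ?_) ?_) (prEv_informationDensity_gt_le hP hPU hPY _ u)
  · rw [hPY]
    exact hP.sum_fst.1 y
  · rintro y ⟨hU, hY, hlog⟩
    exact ⟨hU, hY, (lt_inv_mul_iff₀ (Nat.cast_pos.mpr hn)).mp (by simpa using hlog)⟩

theorem binning_error_bound_general
    {𝒰 𝒴 : Type*} [Fintype 𝒰] [Fintype 𝒴] [DecidableEq 𝒰]
    {n : ℕ} (hn : 1 ≤ n)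
    (P : (Fin n → 𝒰) × (Fin n → 𝒴) → ℝ) (hP : IsPMF P)
    (PU : (Fin n → 𝒰) → ℝ) (hPU : ∀ u, PU u = ∑ y, P (u, y))
    (PY : (Fin n → 𝒴) → ℝ) (hPY : ∀ y, PY y = ∑ u, P (u, y))
    (r r' rb ε : ℝ)
    (T2 : Set ((Fin n → 𝒴) × (Fin n → 𝒰)))
    (hT2 : T2 = {p | 0 < PU p.2 ∧ 0 < PY p.1 ∧
      r' - ε < (1 / (n : ℝ)) * Real.log (P (p.2, p.1) / (PY p.1 * PU p.2))})
    -- the codebook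
    (C : Finset (Fin n → 𝒰)) (hC : (C.card : ℝ) ≤ Real.exp (n * rb))
    -- the number of bins
    (M₂ : ℕ) (hM : Real.exp (n * r) ≤ (M₂ : ℝ))
    -- the joint law of the pair (u*, Y): u* is a random element of C and Y ~ P_Y
    (ν : (Fin n → 𝒰) × (Fin n → 𝒴) → ℝ) (hν : IsPMF ν)
    (hνY : ∀ y, ∑ u, ν (u, y) = PY y)
    -- the joint law of (bin assignment, (u*, Y)): the bins (B(u))_{u ∈ C} are i.i.d.
    -- uniform on Fin M₂ and the whole bin assignment is independent of (u*, Y)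
    (μ : ({v // v ∈ C} → Fin M₂) × ((Fin n → 𝒰) × (Fin n → 𝒴)) → ℝ)
    (hμ : ∀ b p, μ (b, p) = ν p / (M₂ : ℝ) ^ C.card) :
    prEv μ {ω | ∃ u' : {v // v ∈ C}, (u' : Fin n → 𝒰) ≠ ω.2.1 ∧
        (∃ h : ω.2.1 ∈ C, ω.1 u' = ω.1 ⟨ω.2.1, h⟩) ∧ (ω.2.2, (u' : Fin n → 𝒰)) ∈ T2} ≤
      Real.exp (-(n : ℝ) * (r + r' - rb - ε)) := by
  have hM₂ : (0 : ℝ) < M₂ := (Real.exp_pos _).trans_le hM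
  have : NeZero M₂ := ⟨by exact_mod_cast hM₂.ne'⟩
  have hμ_unif : μ = fun ω => ν ω.2 / Fintype.card ({v // v ∈ C} → Fin M₂) := by
    funext ⟨b, p⟩
    simp [hμ]
  have hcodeword (u' : {v // v ∈ C}) :
      prEv μ {ω | (u' : Fin n → 𝒰) ≠ ω.2.1 ∧ (∃ h : ω.2.1 ∈ C, ω.1 u' = ω.1 ⟨ω.2.1, h⟩) ∧
        (ω.2.2, (u' : Fin n → 𝒰)) ∈ T2} ≤ Real.exp (-(n * (r' - ε))) / M₂ := by
    calc _ ≤ prEv ν {p | p.2 ∈ {y | (y, (u' : Fin n → 𝒰)) ∈ T2}} / M₂ := by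
          rw [hμ_unif]
          exact prEv_bin_collision_le hν.1 u' {y | (y, (u' : Fin n → 𝒰)) ∈ T2}
      _ = prEv PY {y | (y, (u' : Fin n → 𝒰)) ∈ T2} / M₂ := by
          rw [prEv_setOf_snd_mem, funext hνY]
      _ ≤ _ := by
          gcongr
          rw [hT2]
          exact prEv_informationDensity_div_gt_le hP hPU hPY hn _ u'
  have hμ0 (ω) : 0 ≤ μ ω := by
    rw [hμ_unif]
    exact div_nonneg (hν.1 _) (Nat.cast_nonneg _)
  calc _ ≤ _ := prEv_setOf_exists_le hμ0 _
    _ ≤ ∑ _u' : {v // v ∈ C}, Real.exp (-(n * (r' - ε))) / M₂ :=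
        sum_le_sum fun u' _ => hcodeword u'
    _ = C.card * Real.exp (-(n * (r' - ε))) * (M₂ : ℝ)⁻¹ := by
        rw [sum_const, card_univ, Fintype.card_coe, nsmul_eq_mul]
        ring
    _ ≤ Real.exp (n * rb) * Real.exp (-(n * (r' - ε))) * (Real.exp (n * r))⁻¹ := by gcongr
    _ = Real.exp (-(n : ℝ) * (r + r' - rb - ε)) := by
        rw [← Real.exp_neg, ← Real.exp_add, ← Real.exp_add]
        ring_nf

/-- Debinning (binning-error) bound: if a codebook `C` of at most `e^{n r̄₀}` codewords is
randomly binned into `M₂ ≥ e^{n r}` bins, i.i.d. uniformly and independently of the pair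
`(Y, u*)` (where `u*` is a random codeword of `C` and `Y ~ P_Y`), then the probability that
some other codeword of the bin of `u*` is jointly typical with `Y` (i.e. lies in `T²`) is at
most `e^{-n(r + r' - r̄₀ - ε)}`. -/
theorem binning_error_bound
    {𝒰 𝒴 : Type*} [Fintype 𝒰] [Fintype 𝒴] [DecidableEq 𝒰]
    {n : ℕ} (hn : 1 ≤ n)
    (P : (Fin n → 𝒰) × (Fin n → 𝒴) → ℝ) (hP : IsPMF P)
    (PU : (Fin n → 𝒰) → ℝ) (hPU : ∀ u, PU u = ∑ y, P (u, y))
    (PY : (Fin n → 𝒴) → ℝ) (hPY : ∀ y, PY y = ∑ u, P (u, y))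
    (r r' rb ε : ℝ) (hr : 0 < r) (hε : 0 < ε)
    (T2 : Set ((Fin n → 𝒴) × (Fin n → 𝒰)))
    (hT2 : T2 = {p | 0 < PU p.2 ∧ 0 < PY p.1 ∧
      r' - ε < (1 / (n : ℝ)) * Real.log (P (p.2, p.1) / (PY p.1 * PU p.2))})
    -- the codebook
    (C : Finset (Fin n → 𝒰)) (hC : (C.card : ℝ) ≤ Real.exp (n * rb))
    -- the number of bins
    (M₂ : ℕ) (hM : Real.exp (n * r) ≤ (M₂ : ℝ))
    -- the joint law of the pair (u*, Y): u* is a random element of C and Y ~ P_Y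
    (ν : (Fin n → 𝒰) × (Fin n → 𝒴) → ℝ) (hν : IsPMF ν)
    (hνC : ∀ u y, u ∉ C → ν (u, y) = 0)
    (hνY : ∀ y, ∑ u, ν (u, y) = PY y)
    -- the joint law of (bin assignment, (u*, Y)): the bins (B(u))_{u ∈ C} are i.i.d.
    -- uniform on Fin M₂ and the whole bin assignment is independent of (u*, Y)
    (μ : ({v // v ∈ C} → Fin M₂) × ((Fin n → 𝒰) × (Fin n → 𝒴)) → ℝ)
    (hμ : ∀ b p, μ (b, p) = ν p / (M₂ : ℝ) ^ C.card) :
    prEv μ {ω | ∃ u' : {v // v ∈ C}, (u' : Fin n → 𝒰) ≠ ω.2.1 ∧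
        (∃ h : ω.2.1 ∈ C, ω.1 u' = ω.1 ⟨ω.2.1, h⟩) ∧ (ω.2.2, (u' : Fin n → 𝒰)) ∈ T2} ≤
      Real.exp (-(n : ℝ) * (r + r' - rb - ε)) :=
  binning_error_bound_general hn P hP PU hPU PY hPY r r' rb ε T2 hT2 C hC M₂ hM ν hν hνY μ hμ

end
end
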